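/- Let H₁ be an (n−k₁)×n matrix and H₂ an (n−k₂)×n matrix over F₂[D], with Smith decompositions Hᵢ = Aᵢ·[I_{n−kᵢ} 0]·Bᵢ (Aᵢ, Bᵢ invertible over F₂[D]), and let B_{ia} be the first n−kᵢ rows of Bᵢ. Then the rank over the field F₂(D) of H₁·σ(H₂)ᵀ equals the rank over F₂(D) of E = B_{1a}·σ(B_{2a})ᵀ. (This common rank c is the number of ebits per frame required by the entanglement-assisted quantum convolutional code constructed from H₁ and H₂.) -/

import Mathlib

/-
Writing `Hᵢ = Aᵢ·[I 0]·Bᵢ = Aᵢ·Bᵢₐ`, we get `H₁·σ(H₂)ᵀ = A₁·(B₁ₐ·σ(B₂ₐ)ᵀ)·σ(A₂)ᵀ`, and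
multiplying on either side by a matrix with unit determinant does not change the rank.
-/

open Matrix

/-- The `m × n` matrix `[I 0]` (entry `1` iff row and column index agree as naturals). -/
def oneZero (R : Type*) [Semiring R] (m n : ℕ) : Matrix (Fin m) (Fin n) R :=
  Matrix.of fun i j => if (i : ℕ) = (j : ℕ) then (1 : R) else 0

theorem oneZero_mul {R : Type*} [Semiring R] {ι : Type*} {m n : ℕ} (h : m ≤ n)
    (B : Matrix (Fin n) ι R) :
    oneZero R m n * B = B.submatrix (Fin.castLE h) id := by
  ext i j
  rw [Matrix.mul_apply, Finset.sum_eq_single (Fin.castLE h i)]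
  · simp [oneZero]
  · intro b _ hb
    have hib : (i : ℕ) ≠ b := fun hib => hb (Fin.ext hib.symm)
    simp [oneZero, hib]
  · simp

theorem map_mul_oneZero_mul {R S : Type*} [Semiring R] [Semiring S] (f : R →+* S)
    {ι κ : Type*} [Fintype ι] {m n : ℕ} (h : m ≤ n) (A : Matrix ι (Fin m) R)
    (B : Matrix (Fin n) κ R) :
    (A * oneZero R m n * B).map f = A.map f * (B.submatrix (Fin.castLE h) id).map f := by
  rw [Matrix.mul_assoc, oneZero_mul h, Matrix.map_mul]

theorem isUnit_det_map {R S : Type*} [CommRing R] [CommRing S] (f : R →+* S)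
    {ι : Type*} [Fintype ι] [DecidableEq ι] {A : Matrix ι ι R} (hA : IsUnit A.det) :
    IsUnit (A.map f).det := by
  simpa [RingHom.map_det] using hA.map f

theorem rank_mul_mul_transpose_mul_of_isUnit_det {R : Type*} [CommRing R]
    {ι κ ν : Type*} [Fintype ι] [DecidableEq ι] [Fintype κ] [DecidableEq κ] [Fintype ν]
    {P : Matrix ι ι R} {Q : Matrix κ κ R} (hP : IsUnit P.det) (hQ : IsUnit Q.det)
    (M : Matrix ι ν R) (N : Matrix κ ν R) :
    (P * M * (Q * N)ᵀ).rank = (M * Nᵀ).rank := by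
  rw [transpose_mul, ← Matrix.mul_assoc, Matrix.mul_assoc P,
    rank_mul_eq_left_of_isUnit_det _ _ (by rwa [det_transpose]),
    rank_mul_eq_right_of_isUnit_det _ _ hP]

theorem stmt2_general (n k₁ k₂ : ℕ)
    (σ : RatFunc (ZMod 2) ≃+* RatFunc (ZMod 2))
    (H₁ : Matrix (Fin (n - k₁)) (Fin n) (Polynomial (ZMod 2)))
    (H₂ : Matrix (Fin (n - k₂)) (Fin n) (Polynomial (ZMod 2)))
    (A₁ : Matrix (Fin (n - k₁)) (Fin (n - k₁)) (Polynomial (ZMod 2)))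
    (A₂ : Matrix (Fin (n - k₂)) (Fin (n - k₂)) (Polynomial (ZMod 2)))
    (B₁ B₂ : Matrix (Fin n) (Fin n) (Polynomial (ZMod 2)))
    (hA₁ : IsUnit A₁.det) (hA₂ : IsUnit A₂.det)
    (hH₁ : H₁ = A₁ * oneZero (Polynomial (ZMod 2)) (n - k₁) n * B₁)
    (hH₂ : H₂ = A₂ * oneZero (Polynomial (ZMod 2)) (n - k₂) n * B₂) :
    let φ : Polynomial (ZMod 2) → RatFunc (ZMod 2) :=
      algebraMap (Polynomial (ZMod 2)) (RatFunc (ZMod 2))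
    let B₁a := B₁.submatrix (fun i : Fin (n - k₁) => Fin.castLE (Nat.sub_le n k₁) i) id
    let B₂a := B₂.submatrix (fun i : Fin (n - k₂) => Fin.castLE (Nat.sub_le n k₂) i) id
    ((H₁.map φ) * ((H₂.map φ).map σ)ᵀ).rank =
      ((B₁a.map φ) * ((B₂a.map φ).map σ)ᵀ).rank := by
  intro φ B₁a B₂a
  let ψ := (σ : RatFunc (ZMod 2) →+* RatFunc (ZMod 2)).comp (algebraMap (Polynomial (ZMod 2)) _)
  have hH₁φ : H₁.map φ = A₁.map φ * B₁a.map φ :=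
    hH₁ ▸ map_mul_oneZero_mul _ (Nat.sub_le n k₁) A₁ B₁
  have hH₂ψ : (H₂.map φ).map σ = A₂.map ψ * B₂a.map ψ := by
    rw [Matrix.map_map]
    exact hH₂ ▸ map_mul_oneZero_mul ψ (Nat.sub_le n k₂) A₂ B₂
  rw [hH₁φ, hH₂ψ, rank_mul_mul_transpose_mul_of_isUnit_det (isUnit_det_map _ hA₁)
    (isUnit_det_map ψ hA₂), Matrix.map_map]
  rfl

/-- With Smith decompositions `Hᵢ = Aᵢ·[I 0]·Bᵢ` over `F₂[D]`,
the rank over `F₂(D)` of `H₁·σ(H₂)ᵀ` equals the rank over `F₂(D)` of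
`E = B₁ₐ·σ(B₂ₐ)ᵀ`, where `σ` is the automorphism of `F₂(D)` with `σ(D) = D⁻¹`. -/
theorem stmt2 (n k₁ k₂ : ℕ) (hk₁ : k₁ ≤ n) (hk₂ : k₂ ≤ n)
    (σ : RatFunc (ZMod 2) ≃+* RatFunc (ZMod 2)) (hσ : σ RatFunc.X = RatFunc.X⁻¹)
    (H₁ : Matrix (Fin (n - k₁)) (Fin n) (Polynomial (ZMod 2)))
    (H₂ : Matrix (Fin (n - k₂)) (Fin n) (Polynomial (ZMod 2)))
    (A₁ : Matrix (Fin (n - k₁)) (Fin (n - k₁)) (Polynomial (ZMod 2)))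
    (A₂ : Matrix (Fin (n - k₂)) (Fin (n - k₂)) (Polynomial (ZMod 2)))
    (B₁ B₂ : Matrix (Fin n) (Fin n) (Polynomial (ZMod 2)))
    (hA₁ : IsUnit A₁.det) (hA₂ : IsUnit A₂.det)
    (hB₁ : IsUnit B₁.det) (hB₂ : IsUnit B₂.det)
    (hH₁ : H₁ = A₁ * oneZero (Polynomial (ZMod 2)) (n - k₁) n * B₁)
    (hH₂ : H₂ = A₂ * oneZero (Polynomial (ZMod 2)) (n - k₂) n * B₂) :
    let φ : Polynomial (ZMod 2) → RatFunc (ZMod 2) :=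
      algebraMap (Polynomial (ZMod 2)) (RatFunc (ZMod 2))
    let B₁a := B₁.submatrix (fun i : Fin (n - k₁) => Fin.castLE (Nat.sub_le n k₁) i) id
    let B₂a := B₂.submatrix (fun i : Fin (n - k₂) => Fin.castLE (Nat.sub_le n k₂) i) id
    ((H₁.map φ) * ((H₂.map φ).map σ)ᵀ).rank =
      ((B₁a.map φ) * ((B₂a.map φ).map σ)ᵀ).rank :=
  stmt2_general n k₁ k₂ σ H₁ H₂ A₁ A₂ B₁ B₂ hA₁ hA₂ hH₁ hH₂
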